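/- arXiv:2601.11555 — 2 statements merged into one kernel-verified Lean document; each statement's English description precedes it below -/
import Mathlib

section
/- Suppose there exist v ∈ ℝ^n and c ∈ ℝ such that ⟨v, s⟩ > c for every s ∈ S_i (i = 1,…,k) and ⟨v, t⟩ < c for every t ∈ C_j (j = 1,…,m). If Z = (x_1,…,x_k,y_1,…,y_m) ∈ A is a feasible point such that some x_i lies in the interior of S_i (or some y_j lies in the interior of C_j), then there exists a feasible point Z̄ ∈ A with F(Z̄) < F(Z). Consequently, at any optimal solution every component lies on the boundary of its set. -/
/-!
Moving an interior component `xᵢ` a little in the direction `-v` keeps it feasible and, since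
`⟪v, xᵢ - yⱼ⟫ > 0` for every `j` by the separation, strictly shortens each segment `xᵢ yⱼ`
(to first order `‖a - t v‖² = ‖a‖² - 2t⟪v, a⟫ + O(t²)`). Hence the objective drops, so at an
optimum no component is interior, i.e. all lie on the boundary. The case of an interior `yⱼ`
is the same with `-v` and the roles of the two families swapped.
-/

open scoped RealInnerProductSpace Topology
open Filter Function

variable {E : Type*} [NormedAddCommGroup E]

section InnerProductSpace

variable [InnerProductSpace ℝ E]

theorem norm_sub_smul_lt_norm {a v : E} {t : ℝ} (ht : 0 < t) (h : t * ‖v‖ ^ 2 < 2 * ⟪v, a⟫) :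
    ‖a - t • v‖ < ‖a‖ := by
  refine lt_of_pow_lt_pow_left₀ 2 (norm_nonneg a) ?_
  calc ‖a - t • v‖ ^ 2 = ‖a‖ ^ 2 - t * (2 * ⟪v, a⟫ - t * ‖v‖ ^ 2) := by
        rw [norm_sub_sq_real, real_inner_smul_right, real_inner_comm, norm_smul,
          Real.norm_of_nonneg ht.le]
        ring
    _ < ‖a‖ ^ 2 := by nlinarith

theorem eventually_norm_sub_smul_lt_norm {a v : E} (h : 0 < ⟪v, a⟫) :
    ∀ᶠ t in 𝓝[>] (0 : ℝ), ‖a - t • v‖ < ‖a‖ := by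
  have hsmall : ∀ᶠ t in 𝓝[>] (0 : ℝ), t * ‖v‖ ^ 2 < 2 * ⟪v, a⟫ := by
    refine (Tendsto.mono_left ?_ nhdsWithin_le_nhds).eventually
      (gt_mem_nhds (show (0 : ℝ) < 2 * ⟪v, a⟫ by linarith))
    exact (by fun_prop : Continuous fun t : ℝ => t * ‖v‖ ^ 2).tendsto' 0 0 (by simp)
  filter_upwards [self_mem_nhdsWithin, hsmall] with t ht hst
  exact norm_sub_smul_lt_norm ht hst

end InnerProductSpace

noncomputable def heronCost {ι κ : Type*} [Fintype ι] [Fintype κ] (x : ι → E) (y : κ → E) : ℝ :=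
  ∑ i, ∑ j, ‖x i - y j‖

section heronCost

variable {ι κ : Type*} [Fintype ι] [Fintype κ]

theorem heronCost_comm (x : ι → E) (y : κ → E) : heronCost x y = heronCost y x := by
  simp only [heronCost]
  rw [Finset.sum_comm]
  simp_rw [norm_sub_rev]

theorem heronCost_update_lt [DecidableEq ι] [Nonempty κ] {x : ι → E} {y : κ → E} {i₀ : ι}
    {a : E} (h : ∀ j, ‖a - y j‖ < ‖x i₀ - y j‖) : heronCost (update x i₀ a) y < heronCost x y := by
  have hi₀ : ∑ j, ‖a - y j‖ < ∑ j, ‖x i₀ - y j‖ :=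
    Finset.sum_lt_sum_of_nonempty Finset.univ_nonempty fun j _ => h j
  refine Finset.sum_lt_sum (fun i _ => ?_) ⟨i₀, Finset.mem_univ _, by simpa using hi₀⟩
  rcases eq_or_ne i i₀ with rfl | hi
  · simpa using hi₀.le
  · simp [update_of_ne hi]

theorem exists_heronCost_lt_of_mem_interior [InnerProductSpace ℝ E] [Nonempty κ]
    {S : ι → Set E} {x : ι → E} (hx : ∀ i, x i ∈ S i) (y : κ → E) {i₀ : ι}
    (hint : x i₀ ∈ interior (S i₀)) {v : E} (hsep : ∀ j, ⟪v, y j⟫ < ⟪v, x i₀⟫) :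
    ∃ x' : ι → E, (∀ i, x' i ∈ S i) ∧ heronCost x' y < heronCost x y := by
  classical
  have hstay : ∀ᶠ t in 𝓝[>] (0 : ℝ), x i₀ - t • v ∈ interior (S i₀) := by
    refine (Tendsto.mono_left ?_ nhdsWithin_le_nhds).eventually
      (isOpen_interior.mem_nhds hint)
    exact (by fun_prop : Continuous fun t : ℝ => x i₀ - t • v).tendsto' 0 (x i₀) (by simp)
  have hshorter : ∀ᶠ t in 𝓝[>] (0 : ℝ), ∀ j, ‖x i₀ - t • v - y j‖ < ‖x i₀ - y j‖ := by
    refine eventually_all.2 fun j => ?_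
    simp_rw [sub_right_comm _ _ (y j)]
    exact eventually_norm_sub_smul_lt_norm (by rw [inner_sub_right]; linarith [hsep j])
  obtain ⟨t, hSt, hlt⟩ := (hstay.and hshorter).exists
  refine ⟨update x i₀ (x i₀ - t • v), ?_, heronCost_update_lt hlt⟩
  exact (forall_update_iff x fun i z => z ∈ S i).2
    ⟨interior_subset hSt, fun i _ => hx i⟩

theorem exists_heronCost_lt_of_separated [InnerProductSpace ℝ E] [Nonempty ι] [Nonempty κ]
    {S : ι → Set E} {C : κ → Set E} {v : E} {c : ℝ} (hSsep : ∀ i, ∀ s ∈ S i, c < ⟪v, s⟫)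
    (hCsep : ∀ j, ∀ t ∈ C j, ⟪v, t⟫ < c) {x : ι → E} {y : κ → E} (hx : ∀ i, x i ∈ S i)
    (hy : ∀ j, y j ∈ C j) (hint : (∃ i, x i ∈ interior (S i)) ∨ (∃ j, y j ∈ interior (C j))) :
    ∃ x' y', (∀ i, x' i ∈ S i) ∧ (∀ j, y' j ∈ C j) ∧ heronCost x' y' < heronCost x y := by
  have hsep : ∀ i j, ⟪v, y j⟫ < ⟪v, x i⟫ := fun i j =>
    (hCsep j _ (hy j)).trans (hSsep i _ (hx i))
  rcases hint with ⟨i, hi⟩ | ⟨j, hj⟩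
  · obtain ⟨x', hx', hlt⟩ := exists_heronCost_lt_of_mem_interior hx y hi (hsep i)
    exact ⟨x', y, hx', hy, hlt⟩
  · obtain ⟨y', hy', hlt⟩ := exists_heronCost_lt_of_mem_interior (v := -v) hy x hj
      fun i => by simpa only [inner_neg_left, neg_lt_neg_iff] using hsep i j
    exact ⟨x, y', hx, hy', by rwa [heronCost_comm x y', heronCost_comm x y]⟩

end heronCost

theorem interior_component_not_optimal_km_Heron_general
    (n k m : ℕ) (hk : 0 < k) (hm : 0 < m)
    (S : Fin k → Set (EuclideanSpace ℝ (Fin n)))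
    (C : Fin m → Set (EuclideanSpace ℝ (Fin n)))
    (v : EuclideanSpace ℝ (Fin n)) (c : ℝ)
    (hSsep : ∀ i, ∀ s ∈ S i, c < ⟪v, s⟫) (hCsep : ∀ j, ∀ t ∈ C j, ⟪v, t⟫ < c) :
    (∀ (x : Fin k → EuclideanSpace ℝ (Fin n)) (y : Fin m → EuclideanSpace ℝ (Fin n)),
      (∀ i, x i ∈ S i) → (∀ j, y j ∈ C j) →
      ((∃ i, x i ∈ interior (S i)) ∨ (∃ j, y j ∈ interior (C j))) →
      ∃ (x' : Fin k → EuclideanSpace ℝ (Fin n)) (y' : Fin m → EuclideanSpace ℝ (Fin n)),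
        (∀ i, x' i ∈ S i) ∧ (∀ j, y' j ∈ C j) ∧
        ∑ i, ∑ j, ‖x' i - y' j‖ < ∑ i, ∑ j, ‖x i - y j‖) ∧
    (∀ (x : Fin k → EuclideanSpace ℝ (Fin n)) (y : Fin m → EuclideanSpace ℝ (Fin n)),
      (∀ i, x i ∈ S i) → (∀ j, y j ∈ C j) →
      (∀ (x' : Fin k → EuclideanSpace ℝ (Fin n)) (y' : Fin m → EuclideanSpace ℝ (Fin n)),
        (∀ i, x' i ∈ S i) → (∀ j, y' j ∈ C j) →
        ∑ i, ∑ j, ‖x i - y j‖ ≤ ∑ i, ∑ j, ‖x' i - y' j‖) →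
      (∀ i, x i ∈ frontier (S i)) ∧ (∀ j, y j ∈ frontier (C j))) := by
  have : Nonempty (Fin k) := ⟨⟨0, hk⟩⟩
  have : Nonempty (Fin m) := ⟨⟨0, hm⟩⟩
  refine ⟨fun x y hx hy hint => exists_heronCost_lt_of_separated hSsep hCsep hx hy hint,
    fun x y hx hy hopt => ?_⟩
  have hnot : ¬((∃ i, x i ∈ interior (S i)) ∨ (∃ j, y j ∈ interior (C j))) := fun h =>
    let ⟨x', y', hx', hy', hlt⟩ := exists_heronCost_lt_of_separated hSsep hCsep hx hy h
    (hopt x' y' hx' hy').not_gt hlt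
  simp only [not_or, not_exists] at hnot
  exact ⟨fun i => ⟨subset_closure (hx i), hnot.1 i⟩, fun j => ⟨subset_closure (hy j), hnot.2 j⟩⟩

/-- Suppose the feasible sets `S i` and the target sets `C j` are strictly separated by
the hyperplane `{z : ⟪v, z⟫ = c}`.  If a feasible point `Z = (x, y)` has some component
in the interior of its set, then there is a feasible point with strictly smaller
objective value `F`.  Consequently, at any optimal solution every component lies on the
boundary of its set. -/
theorem interior_component_not_optimal_km_Heron
    (n k m : ℕ) (hn : 0 < n) (hk : 0 < k) (hm : 0 < m)
    (S : Fin k → Set (EuclideanSpace ℝ (Fin n)))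
    (C : Fin m → Set (EuclideanSpace ℝ (Fin n)))
    (hSne : ∀ i, (S i).Nonempty) (hScl : ∀ i, IsClosed (S i)) (hScv : ∀ i, Convex ℝ (S i))
    (hCne : ∀ j, (C j).Nonempty) (hCcl : ∀ j, IsClosed (C j)) (hCcv : ∀ j, Convex ℝ (C j))
    (v : EuclideanSpace ℝ (Fin n)) (c : ℝ)
    (hSsep : ∀ i, ∀ s ∈ S i, c < ⟪v, s⟫) (hCsep : ∀ j, ∀ t ∈ C j, ⟪v, t⟫ < c) :
    (∀ (x : Fin k → EuclideanSpace ℝ (Fin n)) (y : Fin m → EuclideanSpace ℝ (Fin n)),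
      (∀ i, x i ∈ S i) → (∀ j, y j ∈ C j) →
      ((∃ i, x i ∈ interior (S i)) ∨ (∃ j, y j ∈ interior (C j))) →
      ∃ (x' : Fin k → EuclideanSpace ℝ (Fin n)) (y' : Fin m → EuclideanSpace ℝ (Fin n)),
        (∀ i, x' i ∈ S i) ∧ (∀ j, y' j ∈ C j) ∧
        ∑ i, ∑ j, ‖x' i - y' j‖ < ∑ i, ∑ j, ‖x i - y j‖) ∧
    (∀ (x : Fin k → EuclideanSpace ℝ (Fin n)) (y : Fin m → EuclideanSpace ℝ (Fin n)),
      (∀ i, x i ∈ S i) → (∀ j, y j ∈ C j) →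
      (∀ (x' : Fin k → EuclideanSpace ℝ (Fin n)) (y' : Fin m → EuclideanSpace ℝ (Fin n)),
        (∀ i, x' i ∈ S i) → (∀ j, y' j ∈ C j) →
        ∑ i, ∑ j, ‖x i - y j‖ ≤ ∑ i, ∑ j, ‖x' i - y' j‖) →
      (∀ i, x i ∈ frontier (S i)) ∧ (∀ j, y j ∈ frontier (C j))) :=
  interior_component_not_optimal_km_Heron_general n k m hk hm S C v c hSsep hCsep
end

section
/- Assume S_i ∩ C_j = ∅ for all i, j, and let Z* = (x_1*, …, x_k*, y_1*, …, y_m*) ∈ A be an optimal solution of the generalized (k,m)-Heron problem. Define n_{S_i} = Σ_{j=1}^m (y_j* − x_i*)/‖x_i* − y_j*‖ for i = 1,…,k and n_{C_j} = Σ_{i=1}^k (x_i* − y_j*)/‖x_i* − y_j*‖ for j = 1,…,m. Then n_{S_i} ∈ N_{S_i}(x_i*) for every i, n_{C_j} ∈ N_{C_j}(y_j*) for every j, and the global equilibrium condition Σ_{i=1}^k n_{S_i} + Σ_{j=1}^m n_{C_j} = 0 holds. -/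
/-!
At an optimum, each `x i` minimizes `w ↦ ∑ j, ‖w - y j‖` over the convex set `S i` (the other
coordinates being fixed), and similarly for each `y j`. Disjointness keeps `x i ≠ y j`, so these
functions are differentiable there, with gradient `∑ j, ‖x i - y j‖⁻¹ • (x i - y j)`; first-order
optimality on a convex set says that minus the gradient lies in the normal cone. The equilibrium
identity is termwise cancellation.
-/

open scoped RealInnerProductSpace

/-- The normal cone to a set `s` at a point `x`:
`N_s(x) = {v : ⟪v, z - x⟫ ≤ 0 for all z ∈ s}`. -/
def normalCone {E : Type*} [NormedAddCommGroup E] [InnerProductSpace ℝ E]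
    (s : Set E) (x : E) : Set E :=
  {v : E | ∀ z ∈ s, ⟪v, z - x⟫ ≤ 0}

theorem IsMinOn.of_sum_pi {ι α β : Type*} [Fintype ι] [DecidableEq ι]
    [AddCommMonoid β] [PartialOrder β] [IsOrderedCancelAddMonoid β]
    {g : ι → α → β} {S : ι → Set α} {x : ι → α} (hx : x ∈ Set.univ.pi S)
    (hmin : IsMinOn (fun x' => ∑ i, g i (x' i)) (Set.univ.pi S) x) (i : ι) :
    IsMinOn (g i) (S i) (x i) := by
  intro u hu
  have h := hmin ((Set.update_mem_pi_iff_of_mem hx).2 fun _ => hu)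
  rw [Set.mem_ofPred_eq] at h
  simp only [Function.apply_update (fun j => g j),
    Finset.sum_update_of_mem (Finset.mem_univ i)] at h
  rwa [Finset.sum_eq_add_sum_sdiff_singleton_of_mem (Finset.mem_univ i),
    add_le_add_iff_right] at h

section InnerProductSpace

variable {E : Type*} [NormedAddCommGroup E] [InnerProductSpace ℝ E]

theorem IsMinOn.neg_mem_normalCone {f : E → ℝ} {s : Set E} {u g : E} (hmin : IsMinOn f s u)
    (hs : Convex ℝ s) (hu : u ∈ s) (hf : HasFDerivAt f (innerSL ℝ g) u) :
    -g ∈ normalCone s u := by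
  intro z hz
  have := hmin.localize.hasFDerivWithinAt_nonneg hf.hasFDerivWithinAt
    (sub_mem_posTangentConeAt_of_segment_subset (hs.segment_subset hu hz))
  simpa [inner_neg_left] using this

theorem hasFDerivAt_norm_sub {u p : E} (h : u ≠ p) :
    HasFDerivAt (fun w => ‖w - p‖) (‖u - p‖⁻¹ • innerSL ℝ (u - p)) u := by
  have hu : ‖u - p‖ ≠ 0 := norm_ne_zero_iff.2 (sub_ne_zero.2 h)
  have := ((hasFDerivAt_id u).sub_const p).norm_sq.sqrt (pow_ne_zero 2 hu)
  simp only [Real.sqrt_sq (norm_nonneg _), id, ContinuousLinearMap.comp_id] at this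
  convert this using 1
  rw [smul_comm, two_smul, ← add_smul]
  congr 1
  field_simp
  ring

theorem hasFDerivAt_sum_norm_sub {ι : Type*} [Fintype ι] {p : ι → E} {u : E}
    (h : ∀ j, u ≠ p j) :
    HasFDerivAt (fun w => ∑ j, ‖w - p j‖) (innerSL ℝ (∑ j, ‖u - p j‖⁻¹ • (u - p j))) u := by
  refine (HasFDerivAt.fun_sum fun j _ => hasFDerivAt_norm_sub (h j)).congr_fderiv ?_
  ext v
  simp

theorem IsMinOn.sum_inv_norm_smul_sub_mem_normalCone {ι : Type*} [Fintype ι] {p : ι → E}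
    {s : Set E} {u : E} (hmin : IsMinOn (fun w => ∑ j, ‖w - p j‖) s u) (hs : Convex ℝ s)
    (hu : u ∈ s) (hp : ∀ j, u ≠ p j) :
    ∑ j, ‖u - p j‖⁻¹ • (p j - u) ∈ normalCone s u := by
  have := hmin.neg_mem_normalCone hs hu (hasFDerivAt_sum_norm_sub hp)
  simpa [← Finset.sum_neg_distrib, ← smul_neg] using this

end InnerProductSpace

theorem generalized_km_Heron_equilibrium_general
    (n k m : ℕ)
    (S : Fin k → Set (EuclideanSpace ℝ (Fin n)))
    (C : Fin m → Set (EuclideanSpace ℝ (Fin n)))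
    (hScv : ∀ i, Convex ℝ (S i))
    (hCcv : ∀ j, Convex ℝ (C j))
    (hdisj : ∀ i j, S i ∩ C j = ∅)
    (x : Fin k → EuclideanSpace ℝ (Fin n)) (y : Fin m → EuclideanSpace ℝ (Fin n))
    (hx : ∀ i, x i ∈ S i) (hy : ∀ j, y j ∈ C j)
    (hopt : ∀ (x' : Fin k → EuclideanSpace ℝ (Fin n)) (y' : Fin m → EuclideanSpace ℝ (Fin n)),
      (∀ i, x' i ∈ S i) → (∀ j, y' j ∈ C j) →
      ∑ i, ∑ j, ‖x i - y j‖ ≤ ∑ i, ∑ j, ‖x' i - y' j‖) :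
    (∀ i, (∑ j, (‖x i - y j‖)⁻¹ • (y j - x i)) ∈ normalCone (S i) (x i)) ∧
    (∀ j, (∑ i, (‖x i - y j‖)⁻¹ • (x i - y j)) ∈ normalCone (C j) (y j)) ∧
    (∑ i, ∑ j, (‖x i - y j‖)⁻¹ • (y j - x i)) +
      (∑ j, ∑ i, (‖x i - y j‖)⁻¹ • (x i - y j)) = 0 := by
  have hne : ∀ i j, x i ≠ y j := fun i j h =>
    (hdisj i j).subset ⟨hx i, h ▸ hy j⟩
  have hminS : IsMinOn (fun x' => ∑ i, ∑ j, ‖x' i - y j‖) (Set.univ.pi S) x :=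
    fun x' hx' => hopt x' y (Set.mem_univ_pi.1 hx') hy
  have hminC : IsMinOn (fun y' => ∑ j, ∑ i, ‖y' j - x i‖) (Set.univ.pi C) y := fun y' hy' => by
    have h := hopt x y' hx (Set.mem_univ_pi.1 hy')
    simp only [norm_sub_rev (x _)] at h
    rwa [Finset.sum_comm, Finset.sum_comm (f := fun i j => ‖y' j - x i‖)] at h
  refine ⟨fun i => ?_, fun j => ?_, ?_⟩
  · exact (hminS.of_sum_pi (g := fun _ w => ∑ j, ‖w - y j‖) (fun i _ => hx i) i)
      |>.sum_inv_norm_smul_sub_mem_normalCone (hScv i) (hx i) (hne i)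
  · simpa only [norm_sub_rev (y j)] using
      (hminC.of_sum_pi (g := fun _ w => ∑ i, ‖w - x i‖) (fun j _ => hy j) j)
      |>.sum_inv_norm_smul_sub_mem_normalCone (hCcv j) (hy j) fun i h => hne i j h.symm
  · rw [Finset.sum_comm (γ := Fin m), ← Finset.sum_add_distrib]
    refine Finset.sum_eq_zero fun i _ => ?_
    simp only [← Finset.sum_add_distrib, ← smul_add, sub_add_sub_cancel, sub_self, smul_zero,
      Finset.sum_const_zero]

/-- At an optimal solution `Z* = (x, y)` of the generalized (k,m)-Heron problem (with
`S i ∩ C j = ∅`), the vectors `n_{S i} = ∑ j (y j - x i)/‖x i - y j‖` and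
`n_{C j} = ∑ i (x i - y j)/‖x i - y j‖` belong to the respective normal cones, and
the global equilibrium condition `∑ i n_{S i} + ∑ j n_{C j} = 0` holds. -/
theorem generalized_km_Heron_equilibrium
    (n k m : ℕ) (hn : 0 < n) (hk : 0 < k) (hm : 0 < m)
    (S : Fin k → Set (EuclideanSpace ℝ (Fin n)))
    (C : Fin m → Set (EuclideanSpace ℝ (Fin n)))
    (hSne : ∀ i, (S i).Nonempty) (hScl : ∀ i, IsClosed (S i)) (hScv : ∀ i, Convex ℝ (S i))
    (hCne : ∀ j, (C j).Nonempty) (hCcl : ∀ j, IsClosed (C j)) (hCcv : ∀ j, Convex ℝ (C j))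
    (hdisj : ∀ i j, S i ∩ C j = ∅)
    (x : Fin k → EuclideanSpace ℝ (Fin n)) (y : Fin m → EuclideanSpace ℝ (Fin n))
    (hx : ∀ i, x i ∈ S i) (hy : ∀ j, y j ∈ C j)
    (hopt : ∀ (x' : Fin k → EuclideanSpace ℝ (Fin n)) (y' : Fin m → EuclideanSpace ℝ (Fin n)),
      (∀ i, x' i ∈ S i) → (∀ j, y' j ∈ C j) →
      ∑ i, ∑ j, ‖x i - y j‖ ≤ ∑ i, ∑ j, ‖x' i - y' j‖) :
    (∀ i, (∑ j, (‖x i - y j‖)⁻¹ • (y j - x i)) ∈ normalCone (S i) (x i)) ∧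
    (∀ j, (∑ i, (‖x i - y j‖)⁻¹ • (x i - y j)) ∈ normalCone (C j) (y j)) ∧
    (∑ i, ∑ j, (‖x i - y j‖)⁻¹ • (y j - x i)) +
      (∑ j, ∑ i, (‖x i - y j‖)⁻¹ • (x i - y j)) = 0 :=
  generalized_km_Heron_equilibrium_general n k m S C hScv hCcv hdisj x y hx hy hopt
end
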